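/- Let d ≤ e < f be integers with d + e + f = 0, and assume k ≤ e. Suppose val(β) = d, k > d, j + k > d + e, val(α·ε^k) = d + e, and val(α·γ − β·ε^j) > d + e. Then val(b) ≤ val(a) if and only if e ≥ i, and when e ≥ i one has val(b) = d + 2i. -/

import Mathlib

/-!
Twisting by Frobenius preserves valuations, so `val α = j + val a` and
`val (ε^i σ(b) - ε^k b) = k + val b`; the first together with `val (α ε^k) = d + e` gives
`val a = d + e + i`. Since `β + aγ = ε^i σ(b) - ε^k b`, one has
`α (ε^i σ(b) - ε^k b) = β ε^i σ(a) + a (αγ - βε^j)`, whose left side has valuation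
`d + e + val b`. On the right the first term has valuation `(d + e) + (d + 2i)` and the second
one exceeds `(d + e) + (d + e + i)`: for `i ≤ e` the first term dominates and `val b = d + 2i`,
for `i > e` both exceed `(d + e) + val a`, so `val b > val a`.
-/

noncomputable section

/-- The ε-adic valuation on `L = k̄((ε))`, with `val 0 = ∞`. -/
def val {K : Type*} [Field K] (x : LaurentSeries K) : WithTop ℤ := x.orderTop

/-- The uniformizer ε of the Laurent series field. -/
def eps (K : Type*) [Field K] : LaurentSeries K := HahnSeries.single 1 1

/-- `σ : L → L` is the Frobenius automorphism: it fixes ε and raises each Laurent-series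
coefficient to the `q`-th power.  (This property determines `σ` uniquely.) -/
def IsFrobenius (K : Type*) [Field K] (q : ℕ)
    (σ : LaurentSeries K → LaurentSeries K) : Prop :=
  ∀ (x : LaurentSeries K) (n : ℤ), (σ x).coeff n = (x.coeff n) ^ q

section Valuation

variable {K : Type*} [Field K]

theorem val_mul (x y : LaurentSeries K) : val (x * y) = val x + val y :=
  HahnSeries.orderTop_mul x y

theorem val_eps_zpow (n : ℤ) : val (eps K ^ n) = n := by
  rw [eps, ← RatFunc.single_zpow, val, HahnSeries.orderTop_single one_ne_zero]

theorem val_eps_zpow_mul (n : ℤ) (x : LaurentSeries K) : val (eps K ^ n * x) = n + val x := by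
  rw [val_mul, val_eps_zpow]

theorem val_add_eq_left {x y : LaurentSeries K} (h : val x < val y) : val (x + y) = val x :=
  HahnSeries.orderTop_add_eq_left h

theorem min_val_le_val_add (x y : LaurentSeries K) : min (val x) (val y) ≤ val (x + y) :=
  HahnSeries.min_orderTop_le_orderTop_add

theorem val_sub_eq_right {x y : LaurentSeries K} (h : val y < val x) : val (x - y) = val y := by
  rw [val, sub_eq_add_neg, HahnSeries.orderTop_add_eq_right (by rwa [HahnSeries.orderTop_neg]),
    HahnSeries.orderTop_neg, val]

theorem val_eps_zpow_mul_sub_of_lt {x y : LaurentSeries K} (hxy : val y = val x) {m n : ℤ}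
    (hmn : m < n) : val (eps K ^ n * y - eps K ^ m * x) = m + val x := by
  rcases eq_or_ne x 0 with rfl | hx
  · simp_all [val]
  refine (val_sub_eq_right ?_).trans (val_eps_zpow_mul m x)
  rw [val_eps_zpow_mul, val_eps_zpow_mul, hxy]
  exact WithTop.add_lt_add_right (HahnSeries.orderTop_ne_top.2 hx) (WithTop.coe_lt_coe.2 hmn)

theorem IsFrobenius.val_apply {q : ℕ} (hq : q ≠ 0) {σ : LaurentSeries K → LaurentSeries K}
    (hσ : IsFrobenius K q σ) (x : LaurentSeries K) : val (σ x) = val x := by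
  have hs : (σ x).support = x.support := by
    ext n; simp [HahnSeries.mem_support, hσ x n, pow_ne_zero_iff hq]
  have h0 : σ x = 0 ↔ x = 0 := by
    rw [← HahnSeries.support_eq_empty_iff, hs, HahnSeries.support_eq_empty_iff]
  unfold val HahnSeries.orderTop
  rcases eq_or_ne x 0 with rfl | hx
  · simp [h0.mpr rfl]
  · rw [dif_neg hx, dif_neg (h0.not.mpr hx)]
    congr 1
    simp only [hs]

theorem val_eq_of_val_eps_zpow_mul_sub_mul_eps_zpow {x y : LaurentSeries K}
    (hxy : val y = val x) {m n k N : ℤ} (hmn : m < n)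
    (h : val ((eps K ^ n * y - eps K ^ m * x) * eps K ^ k) = N) : val x = (N - m - k : ℤ) := by
  rw [val_mul, val_eps_zpow_mul_sub_of_lt hxy hmn, val_eps_zpow] at h
  have hx : val x ≠ ⊤ := by
    rintro hx
    rw [hx, WithTop.add_top, WithTop.top_add] at h
    exact WithTop.top_ne_coe h
  lift val x to ℤ using hx with v
  norm_cast at h ⊢
  omega

theorem val_mul_add_mul_eq_val_mul_eps_zpow_add_val {a b s t α β γ : LaurentSeries K}
    {i j k : ℤ} (hki : k < i) (htb : val t = val b)
    (hα : α = eps K ^ i * s - eps K ^ j * a) (hβ : β = eps K ^ i * t - eps K ^ k * b - a * γ) :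
    val (β * (eps K ^ i * s) + a * (α * γ - β * eps K ^ j)) = val (α * eps K ^ k) + val b := by
  have hsplit : β * (eps K ^ i * s) + a * (α * γ - β * eps K ^ j) =
      α * (eps K ^ i * t - eps K ^ k * b) := by
    rw [hα, hβ]; ring
  rw [hsplit, val_mul, val_eps_zpow_mul_sub_of_lt htb hki, val_mul, val_eps_zpow, add_assoc]

end Valuation

theorem case_d_min_k_le_e_val_b_general (F : Type*) [Field F] [Fintype F]
    (σ : LaurentSeries (AlgebraicClosure F) → LaurentSeries (AlgebraicClosure F))
    (hσ : IsFrobenius (AlgebraicClosure F) (Fintype.card F) σ)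
    (a b c : LaurentSeries (AlgebraicClosure F))
    (i j k : ℤ) (hij : j < i) (hjk : k < j) (hijk : i + j + k = 0)
    (d e : ℤ)
    (α β γ : LaurentSeries (AlgebraicClosure F))
    (hα : α = eps (AlgebraicClosure F) ^ i * σ a - eps (AlgebraicClosure F) ^ j * a)
    (hβ : β = eps (AlgebraicClosure F) ^ i * σ b - eps (AlgebraicClosure F) ^ k * b -
      a * (eps (AlgebraicClosure F) ^ j * σ c - eps (AlgebraicClosure F) ^ k * c))
    (hγ : γ = eps (AlgebraicClosure F) ^ j * σ c - eps (AlgebraicClosure F) ^ k * c)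
    (hvβ : val β = (d : WithTop ℤ))
    (hvα : val (α * eps (AlgebraicClosure F) ^ k) = ((d + e : ℤ) : WithTop ℤ))
    (hminor : ((d + e : ℤ) : WithTop ℤ) < val (α * γ - β * eps (AlgebraicClosure F) ^ j)) :
    (val b ≤ val a ↔ i ≤ e) ∧
    (i ≤ e → val b = ((d + 2 * i : ℤ) : WithTop ℤ)) := by
  set E := eps (AlgebraicClosure F)
  have hvσ := hσ.val_apply Fintype.card_ne_zero
  have hva : val a = ((d + e + i : ℤ) : WithTop ℤ) := by
    rw [val_eq_of_val_eps_zpow_mul_sub_mul_eps_zpow (hvσ a) hij (hα ▸ hvα)]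
    congr 1; omega
  rw [← hγ] at hβ
  have hsum : val (β * (E ^ i * σ a) + a * (α * γ - β * E ^ j)) = (d + e : ℤ) + val b := by
    rw [val_mul_add_mul_eq_val_mul_eps_zpow_add_val (hjk.trans hij) (hvσ b) hα hβ, hvα]
  have hvT1 : val (β * (E ^ i * σ a)) = (d + e : ℤ) + ((d + 2 * i : ℤ) : WithTop ℤ) := by
    rw [val_mul, val_eps_zpow_mul, hvσ, hva, hvβ]
    norm_cast; ring_nf
  have hvT2 : (d + e : ℤ) + ((d + e + i : ℤ) : WithTop ℤ) < val (a * (α * γ - β * E ^ j)) := by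
    rw [val_mul, hva, add_comm]
    exact WithTop.add_lt_add_left WithTop.coe_ne_top hminor
  have hvb (hie : i ≤ e) : val b = ((d + 2 * i : ℤ) : WithTop ℤ) := by
    have hlt : val (β * (E ^ i * σ a)) < val (a * (α * γ - β * E ^ j)) :=
      hvT1 ▸ lt_of_le_of_lt (by norm_cast; omega) hvT2
    rwa [val_add_eq_left hlt, hvT1, WithTop.add_left_inj WithTop.coe_ne_top, eq_comm] at hsum
  have hvab (hei : e < i) : val a < val b := by
    have hlt : (d + e : ℤ) + ((d + e + i : ℤ) : WithTop ℤ) < (d + e : ℤ) + val b := by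
      rw [← hsum]
      refine (lt_min ?_ hvT2).trans_le (min_val_le_val_add _ _)
      rw [hvT1]; norm_cast; omega
    rwa [WithTop.add_lt_add_iff_left WithTop.coe_ne_top, ← hva] at hlt
  refine ⟨⟨fun hba => ?_, fun hie => ?_⟩, hvb⟩
  · by_contra! hei
    exact (hvab hei).not_ge hba
  · rw [hvb hie, hva]
    exact_mod_cast (by omega)

/-- the case `k ≤ e` for `x = ε^{(d,e,f)}s_2s_1`, `d ≤ e < f`: under the
stated valuation conditions, `val(b) ≤ val(a)` iff `e ≥ i`, and when `e ≥ i` one has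
`val(b) = d + 2i`. -/
theorem case_d_min_k_le_e_val_b (F : Type*) [Field F] [Fintype F]
    (σ : LaurentSeries (AlgebraicClosure F) → LaurentSeries (AlgebraicClosure F))
    (hσ : IsFrobenius (AlgebraicClosure F) (Fintype.card F) σ)
    (a b c : LaurentSeries (AlgebraicClosure F))
    (i j k : ℤ) (hij : j < i) (hjk : k < j) (hijk : i + j + k = 0)
    (d e f : ℤ) (hde : d ≤ e) (hef : e < f) (hdef : d + e + f = 0)
    (hke : k ≤ e)
    (α β γ : LaurentSeries (AlgebraicClosure F))
    (hα : α = eps (AlgebraicClosure F) ^ i * σ a - eps (AlgebraicClosure F) ^ j * a)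
    (hβ : β = eps (AlgebraicClosure F) ^ i * σ b - eps (AlgebraicClosure F) ^ k * b -
      a * (eps (AlgebraicClosure F) ^ j * σ c - eps (AlgebraicClosure F) ^ k * c))
    (hγ : γ = eps (AlgebraicClosure F) ^ j * σ c - eps (AlgebraicClosure F) ^ k * c)
    (hvβ : val β = (d : WithTop ℤ))
    (hkd : d < k)
    (hjkde : d + e < j + k)
    (hvα : val (α * eps (AlgebraicClosure F) ^ k) = ((d + e : ℤ) : WithTop ℤ))
    (hminor : ((d + e : ℤ) : WithTop ℤ) < val (α * γ - β * eps (AlgebraicClosure F) ^ j)) :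
    (val b ≤ val a ↔ i ≤ e) ∧
    (i ≤ e → val b = ((d + 2 * i : ℤ) : WithTop ℤ)) :=
  case_d_min_k_le_e_val_b_general F σ hσ a b c i j k hij hjk hijk d e α β γ hα hβ hγ hvβ hvα hminor
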